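/- Let n ≥ 1. For a ∈ ℝ ∖ {0} and a symmetric matrix z ∈ Sym_n(ℝ), let D_a := diag(1, …, 1, a) ∈ GL_n(ℝ), and let w(a, z) ∈ ⋀ⁿ ℝ^{2n} be the wedge product (from top row to bottom row) of the n rows of the n × 2n block matrix (D_a | a^{−1}·D_a·z), each row regarded as a vector in ℝ^{2n}. Then for every smooth compactly supported function Ψ : ⋀ⁿ ℝ^{2n} → ℂ and every real number σ ≥ 1/2, the double integral ∫_{Sym_n(ℝ)} ∫_{ℝ∖{0}} |a|^{σ−1} · |Ψ(w(a, z))| da dz is finite, where da is Lebesgue measure on ℝ and dz is Lebesgue measure on the real vector space Sym_n(ℝ) of symmetric n × n matrices. (This is the key convergence estimate in the proof of Lemma A.1: after the changes of variables in the intertwining integral M_{w₀}Φ_{χ_s}(I_{2n}), the integrand is χ_{s+(1−n²)/2}(a)·Ψ(−Pl₀(diag(I_{n−1},a), diag(I_{n−1},a)·a⁻¹z)) against da^× dz, and Re(s) ≥ n²/2 corresponds to exponent σ = Re(s) + (1−n²)/2 ≥ 1/2.) -/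

import Mathlib

open Matrix MeasureTheory

/-- Index type for the independent entries of a symmetric `n × n` matrix: pairs
`(i, j)` with `i ≤ j`.  Lebesgue measure on `Sym_n(ℝ)` is realized as the product
Lebesgue measure on `symIdx n → ℝ` under the linear parametrization `symOf`. -/
def symIdx (n : ℕ) := {p : Fin n × Fin n // p.1 ≤ p.2}

instance (n : ℕ) : Fintype (symIdx n) := by unfold symIdx; infer_instance

/-- The symmetric matrix with upper-triangular entries given by `u`. -/
def symOf (n : ℕ) (u : symIdx n → ℝ) : Matrix (Fin n) (Fin n) ℝ := fun i j =>
  if h : i ≤ j then u ⟨(i, j), h⟩ else u ⟨(j, i), le_of_not_ge h⟩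

/-- The diagonal matrix `D_a = diag(1, …, 1, a)`. -/
def Dmat (n : ℕ) (a : ℝ) : Matrix (Fin n) (Fin n) ℝ :=
  Matrix.diagonal (fun i => if (i : ℕ) = n - 1 then a else 1)

/-- The `i`-th row of the `n × 2n` block matrix `(D_a | a⁻¹ D_a z)`, regarded as a row
vector in `ℝ^{2n}` (with index set `Fin n ⊕ Fin n`). -/
noncomputable def rowFun (n : ℕ) (a : ℝ) (z : Matrix (Fin n) (Fin n) ℝ) (i : Fin n) :
    (Fin n ⊕ Fin n) → ℝ :=
  Sum.elim (fun j => Dmat n a i j) (fun j => a⁻¹ * (Dmat n a * z) i j)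

/-- The `j`-th element (in increasing order, with the standard identification
`Fin n ⊕ Fin n ≅ Fin 2n`) of a subset `s` of the index set of size `n`. -/
noncomputable def colsOf (n : ℕ) (s : Finset (Fin n ⊕ Fin n)) (hs : s.card = n) :
    Fin n → Fin n ⊕ Fin n := fun j =>
  finSumFinEquiv.symm
    (((s.image finSumFinEquiv).orderIsoOfFin
      (by rw [Finset.card_image_of_injective _ finSumFinEquiv.injective, hs]) j : Fin (n + n)))

/-- The coordinate functional on `⋀ⁿ ℝ^{2n}` (realized inside the exterior algebra of the
space of row vectors) dual to the standard basis vector `e_{α₁} ∧ ⋯ ∧ e_{αₙ}` where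
`s = {α₁ < ⋯ < αₙ}`. -/
noncomputable def detCoord (n : ℕ) (s : Finset (Fin n ⊕ Fin n)) (hs : s.card = n) :
    ExteriorAlgebra ℝ ((Fin n ⊕ Fin n) → ℝ) →ₗ[ℝ] ℝ :=
  ExteriorAlgebra.liftAlternating fun i =>
    if h : i = n then
      ((Matrix.detRowAlternating).compLinearMap
        (LinearMap.funLeft ℝ ℝ (colsOf n s hs))).domDomCongr (finCongr h.symm)
    else 0

/-- The wedge `w(a, z) ∈ ⋀ⁿ ℝ^{2n}` of the `n` rows (from top to bottom) of the block
matrix `(D_a | a⁻¹ D_a z)`. -/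
noncomputable def wWedge (n : ℕ) (a : ℝ) (z : Matrix (Fin n) (Fin n) ℝ) :
    ExteriorAlgebra ℝ ((Fin n ⊕ Fin n) → ℝ) :=
  ExteriorAlgebra.ιMulti ℝ n (rowFun n a z)

lemma detCoord_wWedge (n : ℕ) (s : Finset (Fin n ⊕ Fin n)) (hs : s.card = n)
    (a : ℝ) (z : Matrix (Fin n) (Fin n) ℝ) :
    detCoord n s hs (wWedge n a z) =
      Matrix.det (Matrix.of fun i j => rowFun n a z i (colsOf n s hs j)) := by
  unfold detCoord wWedge
  rw [ExteriorAlgebra.liftAlternating_apply_ιMulti, dif_pos rfl]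
  simp [Matrix.detRowAlternating, AlternatingMap.domDomCongr_apply,
    AlternatingMap.compLinearMap_apply, LinearMap.funLeft_apply]
  rfl
lemma colsOf_mem (n : ℕ) (s : Finset (Fin n ⊕ Fin n)) (hs : s.card = n) (k : Fin n) :
    colsOf n s hs k ∈ s := by
  unfold colsOf
  have h := ((s.image finSumFinEquiv).orderIsoOfFin
      (by rw [Finset.card_image_of_injective _ finSumFinEquiv.injective, hs]) k).2
  rw [Finset.mem_image] at h
  obtain ⟨y, hy, hxy⟩ := h
  rw [← hxy, Equiv.symm_apply_apply]
  exact hy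

lemma colsOf_injective (n : ℕ) (s : Finset (Fin n ⊕ Fin n)) (hs : s.card = n) :
    Function.Injective (colsOf n s hs) := by
  intro x y h
  unfold colsOf at h
  have := finSumFinEquiv.symm.injective h
  exact (Finset.orderIsoOfFin _ _).injective (Subtype.ext this)

lemma abs_det_colsOf (n : ℕ) (s : Finset (Fin n ⊕ Fin n)) (hs : s.card = n)
    (v : Fin n → (Fin n ⊕ Fin n) → ℝ) (c : Fin n → Fin n ⊕ Fin n)
    (hc : Function.Injective c) (hmem : ∀ k, c k ∈ s) :
    |Matrix.det (Matrix.of fun i j => v i (colsOf n s hs j))| =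
      |Matrix.det (Matrix.of fun i j => v i (c j))| := by
  have hcard : Fintype.card s = n := by rw [Fintype.card_coe, hs]
  have hb1 : Function.Bijective (fun k : Fin n => (⟨c k, hmem k⟩ : s)) := by
    rw [Fintype.bijective_iff_injective_and_card]
    exact ⟨fun x y h => hc (congrArg Subtype.val h), by simp [hcard]⟩
  have hb2 : Function.Bijective (fun k : Fin n => (⟨colsOf n s hs k, colsOf_mem n s hs k⟩ : s)) := by
    rw [Fintype.bijective_iff_injective_and_card]
    exact ⟨fun x y h => colsOf_injective n s hs (congrArg Subtype.val h), by simp [hcard]⟩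
  set e1 := Equiv.ofBijective _ hb1
  set e2 := Equiv.ofBijective _ hb2
  set π : Equiv.Perm (Fin n) := e2.trans e1.symm with hπ
  have hcπ : ∀ k, c (π k) = colsOf n s hs k := by
    intro k
    have : (⟨c (π k), hmem _⟩ : s) = e1 (π k) := rfl
    have h2 : e1 (π k) = e2 k := by simp [hπ]
    have := this.trans h2
    exact congrArg Subtype.val this
  have : (Matrix.of fun i j => v i (colsOf n s hs j)) =
      (Matrix.of fun i j => v i (c j)).submatrix id π := by
    ext i j; simp [Matrix.submatrix, hcπ]
  rw [this, Matrix.det_permute', abs_mul]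
  rcases Int.units_eq_one_or (Equiv.Perm.sign π) with h | h <;> simp [h]
lemma det_Dmat (n : ℕ) (hn : 1 ≤ n) (a : ℝ) : (Dmat n a).det = a := by
  rw [Dmat, Matrix.det_diagonal]
  have key : ∀ i : Fin n, ((i : ℕ) = n - 1) = (i = ⟨n - 1, by omega⟩) := by
    intro i; simp [Fin.ext_iff]
  simp_rw [key]
  rw [Finset.prod_ite_eq' Finset.univ (⟨n - 1, by omega⟩ : Fin n) (fun _ => a)]
  simp

def sLeft (n : ℕ) : Finset (Fin n ⊕ Fin n) := Finset.univ.image Sum.inl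

lemma sLeft_card (n : ℕ) : (sLeft n).card = n := by
  rw [sLeft, Finset.card_image_of_injective _ Sum.inl_injective]; simp

lemma abs_detCoord_sLeft (n : ℕ) (hn : 1 ≤ n) (a : ℝ) (z : Matrix (Fin n) (Fin n) ℝ) :
    |detCoord n (sLeft n) (sLeft_card n) (wWedge n a z)| = |a| := by
  rw [detCoord_wWedge,
    abs_det_colsOf n _ _ _ Sum.inl Sum.inl_injective (fun k => by simp [sLeft])]
  have : (Matrix.of fun i j => rowFun n a z i (Sum.inl j)) = Dmat n a := by
    ext i j; simp [rowFun]
  rw [this, det_Dmat n hn]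
def sEnt (n : ℕ) (i j : Fin n) : Finset (Fin n ⊕ Fin n) :=
  insert (Sum.inr j) ((Finset.univ.image Sum.inl).erase (Sum.inl i))

lemma sEnt_card (n : ℕ) (hn : 1 ≤ n) (i j : Fin n) : (sEnt n i j).card = n := by
  rw [sEnt, Finset.card_insert_of_notMem (by simp),
    Finset.card_erase_of_mem (by simp),
    Finset.card_image_of_injective _ Sum.inl_injective]
  simp; omega

lemma abs_detCoord_sEnt (n : ℕ) (hn : 1 ≤ n) (i j : Fin n) (a : ℝ) (ha : a ≠ 0)
    (z : Matrix (Fin n) (Fin n) ℝ) :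
    |detCoord n (sEnt n i j) (sEnt_card n hn i j) (wWedge n a z)| = |z i j| := by
  rw [detCoord_wWedge]
  set c : Fin n → Fin n ⊕ Fin n := fun k => if k = i then Sum.inr j else Sum.inl k with hc
  have hcinj : Function.Injective c := by
    intro x y h
    simp only [hc] at h
    split_ifs at h with h1 h2 h2 <;> simp_all
  have hcmem : ∀ k, c k ∈ sEnt n i j := by
    intro k
    simp only [hc, sEnt]
    split_ifs with h1
    · simp
    · simp [h1]
  rw [abs_det_colsOf n _ _ _ c hcinj hcmem]
  have key : (Matrix.of fun r k => rowFun n a z r (c k)) =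
      (Dmat n a) * ((1 : Matrix (Fin n) (Fin n) ℝ).updateCol i fun r => a⁻¹ * z r j) := by
    ext r k
    rw [show Dmat n a = Matrix.diagonal (fun i : Fin n => if (i : ℕ) = n - 1 then a else 1)
      from rfl, Matrix.diagonal_mul]
    by_cases hk : k = i
    · subst hk
      simp only [hc, if_pos rfl, rowFun, Sum.elim_inr, Matrix.of_apply,
        Matrix.updateCol_self, Dmat, Matrix.diagonal_mul]
      simp
      ring
    · simp [hc, hk, rowFun, Dmat, Matrix.updateCol_apply, Matrix.one_apply,
        Matrix.diagonal_apply]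
  rw [key, Matrix.det_mul, det_Dmat n hn,
    show ((1 : Matrix (Fin n) (Fin n) ℝ).updateCol i fun r => a⁻¹ * z r j).det =
      Matrix.cramer (1 : Matrix (Fin n) (Fin n) ℝ) (fun r => a⁻¹ * z r j) i from
      (Matrix.cramer_apply _ _ _).symm,
    Matrix.cramer_one]
  simp only [Module.End.one_apply]
  rw [show a * (a⁻¹ * z i j) = z i j by field_simp]
lemma meas_rowFun_entry (n : ℕ) (i : Fin n) (x : Fin n ⊕ Fin n) :
    Measurable (fun q : ℝ × (symIdx n → ℝ) => rowFun n q.1 (symOf n q.2) i x) := by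
  have hD : ∀ c : Fin n, Measurable (fun q : ℝ × (symIdx n → ℝ) => Dmat n q.1 i c) := by
    intro c
    simp only [Dmat, Matrix.diagonal_apply]
    split_ifs <;> first | exact measurable_fst | exact measurable_const
  have hz : ∀ k c : Fin n, Measurable (fun q : ℝ × (symIdx n → ℝ) => symOf n q.2 k c) := by
    intro k c
    simp only [symOf]
    split_ifs <;> exact (measurable_pi_apply _).comp measurable_snd
  cases x with
  | inl c => exact hD c
  | inr c =>
    simp only [rowFun, Sum.elim_inr, Matrix.mul_apply]
    exact measurable_fst.inv.mul <|
      Finset.measurable_sum _ fun k _ => (hD k).mul (hz k c)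

lemma meas_coord (n : ℕ) (s : Finset (Fin n ⊕ Fin n)) (hs : s.card = n) :
    Measurable (fun q : ℝ × (symIdx n → ℝ) =>
      detCoord n s hs (wWedge n q.1 (symOf n q.2))) := by
  simp_rw [detCoord_wWedge, Matrix.det_apply]
  apply Finset.measurable_sum
  intro σ _
  simp_rw [Units.smul_def, zsmul_eq_mul]
  exact measurable_const.mul <|
    Finset.measurable_prod _ fun k _ => by
      simpa using meas_rowFun_entry n (σ k) (colsOf n s hs k)
/-- Convergence of the intertwining integral (Lemma A.1): for every smooth compactly
supported function `Ψ` on `⋀ⁿ ℝ^{2n}` (expressed through its coordinates in the standard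
basis) and every `σ ≥ 1/2`, the integral
`∫_{Sym_n(ℝ)} ∫_ℝ |a|^{σ−1} |Ψ(w(a, z))| da dz` is finite. -/
theorem intertwining_integral_convergence (n : ℕ) (hn : 1 ≤ n)
    (Ψ : ({s : Finset (Fin n ⊕ Fin n) // s.card = n} → ℝ) → ℂ)
    (hΨ : ContDiff ℝ (⊤ : ℕ∞) Ψ) (hΨc : HasCompactSupport Ψ) (σ : ℝ) (hσ : 1 / 2 ≤ σ) :
    Integrable (fun q : ℝ × (symIdx n → ℝ) =>
      |q.1| ^ (σ - 1) *
        ‖Ψ (fun s => detCoord n s.1 s.2 (wWedge n q.1 (symOf n q.2)))‖) := by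
  obtain ⟨C, hC⟩ := hΨc.exists_bound_of_continuous hΨ.continuous
  have hC0 : 0 ≤ C := le_trans (norm_nonneg _) (hC 0)
  obtain ⟨R, hR⟩ := (Metric.isBounded_iff_subset_closedBall 0).1 hΨc.isCompact.isBounded
  set R' : ℝ := max R 1 with hR'
  have hR'1 : (1 : ℝ) ≤ R' := le_max_right _ _
  have hball : ∀ x, Ψ x ≠ 0 → ‖x‖ ≤ R' := by
    intro x hx
    have hmem : x ∈ tsupport Ψ := subset_tsupport _ hx
    have := hR hmem
    rw [Metric.mem_closedBall, dist_zero_right] at this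
    exact le_trans this (le_max_left _ _)
  set coords : ℝ × (symIdx n → ℝ) → ({s : Finset (Fin n ⊕ Fin n) // s.card = n} → ℝ) :=
    fun q s => detCoord n s.1 s.2 (wWedge n q.1 (symOf n q.2)) with hcoords_def
  have hcoords : Measurable coords :=
    measurable_pi_lambda _ fun s => meas_coord n s.1 s.2
  have hmeas : AEStronglyMeasurable
      (fun q : ℝ × (symIdx n → ℝ) => |q.1| ^ (σ - 1) * ‖Ψ (coords q)‖) volume :=
    ((measurable_fst.abs.pow_const _).mul
      ((hΨ.continuous.measurable.comp hcoords).norm)).aestronglyMeasurable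
  set K : Set (symIdx n → ℝ) := Set.pi Set.univ fun _ => Set.Icc (-R') R' with hK
  set g : ℝ × (symIdx n → ℝ) → ℝ := fun q =>
    (Set.Icc (-R') R').indicator (fun a => C * |a| ^ (σ - 1)) q.1 *
      K.indicator (fun _ => 1) q.2 with hg_def
  have hg : Integrable g := by
    rw [hg_def, Measure.volume_eq_prod]
    apply Integrable.mul_prod
    · rw [integrable_indicator_iff measurableSet_Icc]
      apply Integrable.const_mul
      have h1 : IntervalIntegrable (fun x : ℝ => |x| ^ (σ - 1)) volume 0 R' := by
        have h0 : IntervalIntegrable (fun x : ℝ => x ^ (σ - 1)) volume 0 R' :=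
          intervalIntegral.intervalIntegrable_rpow' (by linarith)
        rw [intervalIntegrable_iff] at h0 ⊢
        refine h0.congr_fun ?_ measurableSet_uIoc
        intro x hx
        rw [Set.uIoc_of_le (by linarith)] at hx
        simp [abs_of_pos hx.1]
      have h2 : IntervalIntegrable (fun x : ℝ => |x| ^ (σ - 1)) volume (-R') 0 := by
        have := (IntervalIntegrable.iff_comp_neg
          (f := fun x : ℝ => |x| ^ (σ - 1)) (a := R') (b := 0)).1 h1.symm
        simpa [abs_neg] using this
      have h3 := h2.trans h1
      rwa [intervalIntegrable_iff_integrableOn_Icc_of_le (by linarith)] at h3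
    · rw [integrable_indicator_iff (MeasurableSet.univ_pi fun _ => measurableSet_Icc)]
      refine (integrableOn_const_iff (by simp)).2 (Or.inr ?_)
      exact (isCompact_univ_pi fun _ => isCompact_Icc).measure_lt_top
  refine Integrable.mono' hg hmeas ?_
  have hnull : volume {q : ℝ × (symIdx n → ℝ) | q.1 = 0} = 0 := by
    have hset : {q : ℝ × (symIdx n → ℝ) | q.1 = 0} = ({0} : Set ℝ) ×ˢ Set.univ := by
      ext ⟨x, y⟩
      simp [eq_comm]
    rw [hset, Measure.volume_eq_prod, Measure.prod_prod, Real.volume_singleton, zero_mul]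
  filter_upwards [compl_mem_ae_iff.2 hnull] with q hq
  have hq0 : q.1 ≠ 0 := hq
  have hFnn : (0 : ℝ) ≤ |q.1| ^ (σ - 1) * ‖Ψ (coords q)‖ := by positivity
  rw [Real.norm_eq_abs, abs_of_nonneg hFnn]
  have hgnn : 0 ≤ g q := by
    apply mul_nonneg <;> apply Set.indicator_nonneg <;> intros <;> positivity
  by_cases hz : Ψ (coords q) = 0
  · rw [hcoords_def] at hz ⊢
    rw [hz]
    simpa using hgnn
  · have hb := hball _ hz
    have hcb : ∀ s : {s : Finset (Fin n ⊕ Fin n) // s.card = n},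
        |detCoord n s.1 s.2 (wWedge n q.1 (symOf n q.2))| ≤ R' := by
      intro s
      have := norm_le_pi_norm (coords q) s
      rw [Real.norm_eq_abs] at this
      exact le_trans this hb
    have ha : |q.1| ≤ R' := by
      have := hcb ⟨sLeft n, sLeft_card n⟩
      rwa [abs_detCoord_sLeft n hn] at this
    have hu : ∀ p : symIdx n, |q.2 p| ≤ R' := by
      intro p
      obtain ⟨⟨i, j⟩, hij⟩ := (p : {p : Fin n × Fin n // p.1 ≤ p.2})
      have := hcb ⟨sEnt n i j, sEnt_card n hn i j⟩
      rwa [abs_detCoord_sEnt n hn i j q.1 hq0, symOf, dif_pos hij] at this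
    have h1 : q.1 ∈ Set.Icc (-R') R' := by
      rcases abs_le.1 ha with ⟨h, h'⟩; exact ⟨h, h'⟩
    have h2 : q.2 ∈ K := by
      intro p _
      rcases abs_le.1 (hu p) with ⟨h, h'⟩; exact ⟨h, h'⟩
    rw [hg_def]
    simp only [Set.indicator_of_mem h1, Set.indicator_of_mem h2, mul_one]
    rw [mul_comm C]
    exact mul_le_mul_of_nonneg_left (hC _) (by positivity)
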